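/- arXiv:2604.26392 — 8 statements merged into one kernel-verified Lean document; each statement's English description precedes it below -/
import Mathlib

section
/- Let d ≥ 2, let U be a d×d complex unitary matrix, and let v ∈ ℝ^d be a unit vector. Then ∫_{O(d)} I(U (Ov)(Ov)ᵀ U†) dμ_O(O) = (d² − |Tr(U†U*)|²)/(2d(d+2)), where (Ov)(Ov)ᵀ is the rank-one projector onto the real unit vector Ov (a real pure state), regarded as a complex matrix. -/
/-!
For a real unit vector `w` and `ψ = U w`, the pure state `ψψ†` has imaginarity
`(1 - |ψᵀψ|²) / 2`, and `ψᵀψ = wᵀ M w` with `M = UᵀU` symmetric and unitary. Splitting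
`M = A + iB` into real symmetric parts reduces the average to the Haar moments
`E (wᵀ S w)²` of a real symmetric `S`, with `w = O v`.

Since `O(d)` is transitive on each sphere (Householder reflections), the law of `⟨x, w⟩` only
depends on `|x|`. Polarizing the fourth moment with `x ± y` against `√2 x` gives
`E ⟨x, w⟩² ⟨y, w⟩² = E ⟨x, w⟩⁴ / 3` for orthonormal `x, y`; diagonalizing `S` then yields
`E (wᵀ S w)² = ((tr S)² + 2 tr S²) / (d (d + 2))`, the constant being fixed by `S = 1`.
Finally `(tr A)² + (tr B)² = |tr M|²` and `tr A² + tr B² = d` by unitarity of `M`.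
-/

open MeasureTheory Matrix

noncomputable section

/-- The imaginarity of a complex matrix with respect to the computational basis:
`I(ρ) = (1/4)·‖ρ − ρᵀ‖₂²` where `‖A‖₂² = Tr(A†A)` is the squared Hilbert–Schmidt norm. -/
def Imag {d : ℕ} (ρ : Matrix (Fin d) (Fin d) ℂ) : ℝ :=
  (1 / 4) * (((ρ - ρᵀ)ᴴ * (ρ - ρᵀ)).trace).re

instance (d : ℕ) : MeasurableSpace (Matrix.orthogonalGroup (Fin d) ℝ) := borel _

namespace Matrix

variable {n : Type*} [Fintype n]

theorem isCompact_unitaryGroup {𝕜 : Type*} [RCLike 𝕜] [DecidableEq n] :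
    IsCompact (unitaryGroup n 𝕜 : Set (Matrix n n 𝕜)) :=
  (isCompact_univ_pi fun _ => isCompact_univ_pi fun _ => isCompact_closedBall (0 : 𝕜) 1)
    |>.of_isClosed_subset (isClosed_unitary (R := Matrix n n 𝕜)) fun _ hU i _ j _ =>
      mem_closedBall_zero_iff.mpr (entry_norm_bound_of_unitary hU i j)

instance {𝕜 : Type*} [RCLike 𝕜] [DecidableEq n] : CompactSpace (unitaryGroup n 𝕜) :=
  isCompact_iff_compactSpace.mp isCompact_unitaryGroup

theorem mulVec_dotProduct_eq_dotProduct_transpose_mulVec {R : Type*} [CommSemiring R]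
    (Q : Matrix n n R) (x y : n → R) : Q *ᵥ x ⬝ᵥ y = x ⬝ᵥ Qᵀ *ᵥ y :=
  (dotProduct_comm _ _).trans (dotProduct_transpose_mulVec Q x y).symm

section Orthogonal

variable [DecidableEq n]

theorem exists_mem_orthogonalGroup_mulVec_eq {x y : n → ℝ} (h : x ⬝ᵥ x = y ⬝ᵥ y) :
    ∃ Q ∈ orthogonalGroup n ℝ, Q *ᵥ x = y := by
  have hxy :
      ‖(WithLp.toLp 2 x : EuclideanSpace ℝ n)‖ = ‖(WithLp.toLp 2 y : EuclideanSpace ℝ n)‖ := by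
    simp only [EuclideanSpace.norm_eq, Real.norm_eq_abs, sq_abs]
    simpa [dotProduct, sq] using congrArg Real.sqrt h
  let b := (EuclideanSpace.basisFun n ℝ).toBasis
  let f := (Submodule.reflection (ℝ ∙ (WithLp.toLp 2 x - WithLp.toLp 2 y))ᗮ).toLinearEquiv
  have hrepr (z : n → ℝ) : ⇑(b.repr (WithLp.toLp 2 z)) = z := rfl
  have key := LinearMap.toMatrix_mulVec_repr b b f.toLinearMap (WithLp.toLp 2 x)
  rw [hrepr, LinearEquiv.coe_coe, LinearIsometryEquiv.coe_toLinearEquiv,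
    Submodule.reflection_sub hxy, hrepr] at key
  exact ⟨_, LinearIsometryEquiv.toMatrix_mem_unitaryGroup _ _ _, key⟩

theorem IsSymm.exists_mem_orthogonalGroup_eq_mul_diagonal_mul_transpose {S : Matrix n n ℝ}
    (hS : S.IsSymm) : ∃ Q ∈ orthogonalGroup n ℝ, ∃ c : n → ℝ, S = Q * diagonal c * Qᵀ := by
  have hH : S.IsHermitian := isHermitian_iff_isSymm.mpr hS
  refine ⟨hH.eigenvectorUnitary, hH.eigenvectorUnitary.2, hH.eigenvalues, ?_⟩
  conv_lhs => rw [hH.spectral_theorem]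
  simp [Unitary.conjStarAlgAut_apply, RCLike.ofReal_real_eq_id, star_eq_conjTranspose]

theorem mulVec_dotProduct_mulVec_of_mem_orthogonalGroup {Q : Matrix n n ℝ}
    (hQ : Q ∈ orthogonalGroup n ℝ) (x : n → ℝ) : Q *ᵥ x ⬝ᵥ Q *ᵥ x = x ⬝ᵥ x := by
  rw [mulVec_dotProduct_eq_dotProduct_transpose_mulVec, mulVec_mulVec,
    (mem_orthogonalGroup_iff' n ℝ).mp hQ, one_mulVec]

theorem trace_mul_mul_transpose_of_mem_orthogonalGroup {Q : Matrix n n ℝ}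
    (hQ : Q ∈ orthogonalGroup n ℝ) (A : Matrix n n ℝ) : (Q * A * Qᵀ).trace = A.trace := by
  rw [trace_mul_cycle, (mem_orthogonalGroup_iff' n ℝ).mp hQ, one_mul]

end Orthogonal

theorem norm_dotProduct_mulVec_ofReal_sq (M : Matrix n n ℂ) (w : n → ℝ) :
    ‖(fun i => (w i : ℂ)) ⬝ᵥ M *ᵥ (fun i => (w i : ℂ))‖ ^ 2 =
      (w ⬝ᵥ M.map Complex.re *ᵥ w) ^ 2 + (w ⬝ᵥ M.map Complex.im *ᵥ w) ^ 2 := by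
  have hre : ((fun i => (w i : ℂ)) ⬝ᵥ M *ᵥ (fun i => (w i : ℂ))).re =
      w ⬝ᵥ M.map Complex.re *ᵥ w := by
    simp [dotProduct, mulVec, Complex.re_sum, Finset.mul_sum]
  have him : ((fun i => (w i : ℂ)) ⬝ᵥ M *ᵥ (fun i => (w i : ℂ))).im =
      w ⬝ᵥ M.map Complex.im *ᵥ w := by
    simp [dotProduct, mulVec, Complex.im_sum, Finset.mul_sum]
  rw [Complex.sq_norm, Complex.normSq_apply, hre, him]
  ring

theorem norm_trace_conjTranspose_mul_map_conj (U : Matrix n n ℂ) :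
    ‖(Uᴴ * U.map (starRingEnd ℂ)).trace‖ = ‖(Uᵀ * U).trace‖ := by
  rw [conjTranspose, Complex.star_def, ← Matrix.map_mul, ← AddMonoidHom.map_trace,
    Complex.norm_conj]

theorem trace_map_re_sq_add_trace_map_im_sq (M : Matrix n n ℂ) :
    (M.map Complex.re).trace ^ 2 + (M.map Complex.im).trace ^ 2 = ‖M.trace‖ ^ 2 := by
  rw [Complex.sq_norm, Complex.normSq_apply]
  simp [trace, Complex.re_sum, Complex.im_sum, sq]

theorem IsSymm.trace_map_re_mul_add_trace_map_im_mul [DecidableEq n] {M : Matrix n n ℂ}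
    (hM : M.IsSymm) (hU : M ∈ unitaryGroup n ℂ) :
    (M.map Complex.re * M.map Complex.re).trace + (M.map Complex.im * M.map Complex.im).trace =
      Fintype.card n := by
  have h : (M * Mᴴ).trace.re = Fintype.card n := by
    rw [← star_eq_conjTranspose, mem_unitaryGroup_iff.mp hU, trace_one]
    simp
  rw [← h, trace, trace, trace, ← Finset.sum_add_distrib, Complex.re_sum]
  refine Finset.sum_congr rfl fun i _ => ?_
  simp only [diag_apply, mul_apply, map_apply, conjTranspose_apply, Complex.re_sum,
    ← Finset.sum_add_distrib]
  refine Finset.sum_congr rfl fun j _ => ?_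
  rw [hM.apply i j, Complex.star_def, Complex.mul_re, Complex.conj_re, Complex.conj_im]
  ring

end Matrix

theorem Continuous.integrable_of_compactSpace {X : Type*} [TopologicalSpace X] [CompactSpace X]
    [MeasurableSpace X] [OpensMeasurableSpace X] {μ : Measure X} [IsFiniteMeasure μ] {f : X → ℝ}
    (hf : Continuous f) : Integrable f μ :=
  hf.integrable_of_hasCompactSupport (.of_compactSpace f)

section HaarVector

variable {n : Type*} [Fintype n] [DecidableEq n]
  [MeasurableSpace (orthogonalGroup n ℝ)] [BorelSpace (orthogonalGroup n ℝ)]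
  (μ : Measure (orthogonalGroup n ℝ))

theorem integral_comp_mulVec_mulVec [μ.IsMulLeftInvariant] (v : n → ℝ) (f : (n → ℝ) → ℝ)
    {Q : Matrix n n ℝ} (hQ : Q ∈ orthogonalGroup n ℝ) :
    ∫ O, f (Q *ᵥ (O.1 *ᵥ v)) ∂μ = ∫ O, f (O.1 *ᵥ v) ∂μ := by
  simpa only [mulVec_mulVec, Submonoid.coe_mul] using
    integral_mul_left_eq_self (fun O : orthogonalGroup n ℝ => f (O.1 *ᵥ v)) ⟨Q, hQ⟩

theorem integral_comp_dotProduct_mulVec_eq [μ.IsMulLeftInvariant] (v : n → ℝ) {x y : n → ℝ}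
    (h : x ⬝ᵥ x = y ⬝ᵥ y) (g : ℝ → ℝ) :
    ∫ O, g (x ⬝ᵥ O.1 *ᵥ v) ∂μ = ∫ O, g (y ⬝ᵥ O.1 *ᵥ v) ∂μ := by
  obtain ⟨Q, hQ, rfl⟩ := exists_mem_orthogonalGroup_mulVec_eq h.symm
  simp_rw [mulVec_dotProduct_eq_dotProduct_transpose_mulVec]
  exact integral_comp_mulVec_mulVec μ v (fun z => g (y ⬝ᵥ z))
    (transpose_mem_unitaryGroup_iff.mpr hQ)

variable [IsProbabilityMeasure μ] [μ.IsMulLeftInvariant]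

theorem integral_dotProduct_sq_mul_sq_of_orthonormal (v : n → ℝ) {x y : n → ℝ}
    (hx : x ⬝ᵥ x = 1) (hy : y ⬝ᵥ y = 1) (hxy : x ⬝ᵥ y = 0) :
    ∫ O, (x ⬝ᵥ O.1 *ᵥ v) ^ 2 * (y ⬝ᵥ O.1 *ᵥ v) ^ 2 ∂μ = (∫ O, (x ⬝ᵥ O.1 *ᵥ v) ^ 4 ∂μ) / 3 := by
  set F : (n → ℝ) → ℝ := fun z => ∫ O, (z ⬝ᵥ O.1 *ᵥ v) ^ 4 ∂μ
  have hF {z z' : n → ℝ} (h : z ⬝ᵥ z = z' ⬝ᵥ z') : F z = F z' :=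
    integral_comp_dotProduct_mulVec_eq μ v h (· ^ 4)
  have hF2 {z : n → ℝ} (hz : z ⬝ᵥ z = 2) : F z = 4 * F x := by
    have h4 : √2 ^ 4 = 4 := by
      rw [show √2 ^ 4 = (√2 ^ 2) ^ 2 by ring, Real.sq_sqrt zero_le_two]; norm_num
    rw [hF (z' := √2 • x) (by simp [hz, hx]), show F (√2 • x) = √2 ^ 4 * F x by
      simp only [F, smul_dotProduct, smul_eq_mul, mul_pow, integral_const_mul], h4]
  have hplus : F (x + y) = 4 * F x := hF2 <| by
    simp only [add_dotProduct, dotProduct_add, hx, hy, hxy, dotProduct_comm y x]; norm_num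
  have hminus : F (x - y) = 4 * F x := hF2 <| by
    simp only [sub_dotProduct, dotProduct_sub, hx, hy, hxy, dotProduct_comm y x]; norm_num
  have hpolar : (fun O : orthogonalGroup n ℝ => (x ⬝ᵥ O.1 *ᵥ v) ^ 2 * (y ⬝ᵥ O.1 *ᵥ v) ^ 2) =
      fun O => (((x + y) ⬝ᵥ O.1 *ᵥ v) ^ 4 + ((x - y) ⬝ᵥ O.1 *ᵥ v) ^ 4
        - 2 * (x ⬝ᵥ O.1 *ᵥ v) ^ 4 - 2 * (y ⬝ᵥ O.1 *ᵥ v) ^ 4) / 12 := by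
    ext O
    simp only [add_dotProduct, sub_dotProduct]
    ring
  rw [hpolar, integral_div, integral_sub, integral_sub, integral_add, integral_const_mul,
    integral_const_mul]
  · change (F (x + y) + F (x - y) - 2 * F x - 2 * F y) / 12 = F x / 3
    rw [hplus, hminus, hF (hy.trans hx.symm)]
    ring
  all_goals exact Continuous.integrable_of_compactSpace (by fun_prop)

theorem integral_sq_mul_sq_mulVec_apply (v : n → ℝ) {e : n → ℝ} (he : e ⬝ᵥ e = 1) (k l : n) :
    ∫ O, (O.1 *ᵥ v) k ^ 2 * (O.1 *ᵥ v) l ^ 2 ∂μ =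
      (∫ O, (e ⬝ᵥ O.1 *ᵥ v) ^ 4 ∂μ) / 3 * if k = l then 3 else 1 := by
  have hsingle (i j : n) : Pi.single i (1 : ℝ) ⬝ᵥ Pi.single j 1 = if i = j then 1 else 0 := by
    rw [single_one_dotProduct, Pi.single_apply]
  have hunit (i : n) : Pi.single i (1 : ℝ) ⬝ᵥ Pi.single i 1 = e ⬝ᵥ e := by
    rw [hsingle, if_pos rfl, he]
  simp_rw [← single_one_dotProduct k, ← single_one_dotProduct l]
  split_ifs with hkl
  · subst hkl
    simp_rw [← pow_add]
    rw [show 2 + 2 = 4 from rfl, integral_comp_dotProduct_mulVec_eq μ v (hunit k) (· ^ 4)]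
    ring
  · rw [integral_dotProduct_sq_mul_sq_of_orthonormal μ v ((hunit k).trans he) ((hunit l).trans he)
      (by rw [hsingle, if_neg hkl]), integral_comp_dotProduct_mulVec_eq μ v (hunit k) (· ^ 4)]
    ring

theorem integral_sum_mul_sq_sq (v : n → ℝ) {e : n → ℝ} (he : e ⬝ᵥ e = 1) (c : n → ℝ) :
    ∫ O, (∑ k, c k * (O.1 *ᵥ v) k ^ 2) ^ 2 ∂μ =
      (∫ O, (e ⬝ᵥ O.1 *ᵥ v) ^ 4 ∂μ) / 3 * ((∑ k, c k) ^ 2 + 2 * ∑ k, c k ^ 2) := by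
  have hexpand (O : orthogonalGroup n ℝ) : (∑ k, c k * (O.1 *ᵥ v) k ^ 2) ^ 2 =
      ∑ k, ∑ l, c k * c l * ((O.1 *ᵥ v) k ^ 2 * (O.1 *ᵥ v) l ^ 2) := by
    rw [sq, Finset.sum_mul_sum]
    exact Finset.sum_congr rfl fun _ _ => Finset.sum_congr rfl fun _ _ => by ring
  have hint (k l : n) : Integrable
      (fun O : orthogonalGroup n ℝ => c k * c l * ((O.1 *ᵥ v) k ^ 2 * (O.1 *ᵥ v) l ^ 2)) μ :=
    Continuous.integrable_of_compactSpace (by fun_prop)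
  simp_rw [hexpand]
  rw [integral_finsetSum _ fun k _ => integrable_finsetSum _ fun l _ => hint k l,
    Finset.sum_congr rfl fun k _ => integral_finsetSum _ fun l _ => hint k l]
  simp_rw [integral_const_mul, integral_sq_mul_sq_mulVec_apply μ v he]
  set a := (∫ O, (e ⬝ᵥ O.1 *ᵥ v) ^ 4 ∂μ) / 3
  have hterm (k l : n) : c k * c l * (a * if k = l then 3 else 1) =
      a * (c k * c l) + 2 * a * if k = l then c k ^ 2 else 0 := by
    split_ifs with h
    · subst h; ring
    · ring
  simp only [hterm, Finset.sum_add_distrib, ← Finset.mul_sum, Finset.sum_ite_eq, Finset.mem_univ,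
    if_true, sq, Finset.sum_mul_sum]
  ring

theorem integral_dotProduct_mulVec_sq_of_isSymm (v : n → ℝ) {e : n → ℝ} (he : e ⬝ᵥ e = 1)
    {S : Matrix n n ℝ} (hS : S.IsSymm) :
    ∫ O, (O.1 *ᵥ v ⬝ᵥ S *ᵥ (O.1 *ᵥ v)) ^ 2 ∂μ =
      (∫ O, (e ⬝ᵥ O.1 *ᵥ v) ^ 4 ∂μ) / 3 * (S.trace ^ 2 + 2 * (S * S).trace) := by
  obtain ⟨Q, hQ, c, rfl⟩ := hS.exists_mem_orthogonalGroup_eq_mul_diagonal_mul_transpose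
  have hquad (z : n → ℝ) : z ⬝ᵥ (Q * diagonal c * Qᵀ) *ᵥ z = ∑ k, c k * (Qᵀ *ᵥ z) k ^ 2 := by
    rw [← mulVec_mulVec, ← mulVec_mulVec, ← transpose_transpose Q,
      ← mulVec_dotProduct_eq_dotProduct_transpose_mulVec, transpose_transpose]
    simp only [dotProduct, mulVec_diagonal]
    exact Finset.sum_congr rfl fun _ _ => by ring
  have hsq : Q * diagonal c * Qᵀ * (Q * diagonal c * Qᵀ) = Q * diagonal (c * c) * Qᵀ := by
    rw [show Q * diagonal c * Qᵀ * (Q * diagonal c * Qᵀ) =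
        Q * (diagonal c * (Qᵀ * Q) * diagonal c) * Qᵀ by simp only [mul_assoc],
      (mem_orthogonalGroup_iff' n ℝ).mp hQ, mul_one, diagonal_mul_diagonal']
    rfl
  simp_rw [hquad]
  rw [integral_comp_mulVec_mulVec μ v (fun z => (∑ k, c k * z k ^ 2) ^ 2)
      (transpose_mem_unitaryGroup_iff.mpr hQ),
    integral_sum_mul_sq_sq μ v he, hsq, trace_mul_mul_transpose_of_mem_orthogonalGroup hQ,
    trace_mul_mul_transpose_of_mem_orthogonalGroup hQ]
  simp [trace_diagonal, sq]

theorem integral_dotProduct_mulVec_sq {v : n → ℝ} (hv : v ⬝ᵥ v = 1) {S : Matrix n n ℝ}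
    (hS : S.IsSymm) :
    ∫ O, (O.1 *ᵥ v ⬝ᵥ S *ᵥ (O.1 *ᵥ v)) ^ 2 ∂μ =
      (S.trace ^ 2 + 2 * (S * S).trace) / (Fintype.card n * (Fintype.card n + 2)) := by
  have hunit (O : orthogonalGroup n ℝ) : O.1 *ᵥ v ⬝ᵥ O.1 *ᵥ v = 1 :=
    (mulVec_dotProduct_mulVec_of_mem_orthogonalGroup O.2 v).trans hv
  have hnorm :
      (∫ O, (v ⬝ᵥ O.1 *ᵥ v) ^ 4 ∂μ) / 3 * (Fintype.card n * (Fintype.card n + 2)) = 1 := by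
    have h := integral_dotProduct_mulVec_sq_of_isSymm μ v hv isSymm_one
    simp only [one_mulVec, hunit, one_pow, integral_const, probReal_univ, smul_eq_mul, mul_one,
      trace_one] at h
    linear_combination -h
  rw [integral_dotProduct_mulVec_sq_of_isSymm μ v hv hS,
    eq_div_iff (right_ne_zero_of_mul_eq_one hnorm)]
  linear_combination (S.trace ^ 2 + 2 * (S * S).trace) * hnorm

end HaarVector

theorem imag_vecMulVec_star {d : ℕ} {u : Fin d → ℂ} (hu : star u ⬝ᵥ u = 1) :
    Imag (vecMulVec u (star u)) = (1 - ‖u ⬝ᵥ u‖ ^ 2) / 2 := by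
  set ρ := vecMulVec u (star u)
  have hT : ρᵀ = vecMulVec (star u) u := transpose_vecMulVec _ _
  have hH : (ρ - ρᵀ)ᴴ = ρ - ρᵀ := by
    simp [ρ, hT, conjTranspose_sub, conjTranspose_vecMulVec]
  have hu' : u ⬝ᵥ star u = 1 := by rw [dotProduct_comm, hu]
  have hss : star u ⬝ᵥ star u = star (u ⬝ᵥ u) := by simp [dotProduct, star_sum]
  have htr : ((ρ - ρᵀ) * (ρ - ρᵀ)).trace = 2 - 2 * ((u ⬝ᵥ u) * star (u ⬝ᵥ u)) := by
    simp only [sub_mul, mul_sub, trace_sub, hT, ρ, vecMulVec_mul_vecMulVec, trace_vecMulVec,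
      dotProduct_smul, smul_eq_mul, hu, hu', hss]
    ring
  rw [Imag, hH, htr, Complex.star_def, Complex.mul_conj, Complex.normSq_eq_norm_sq]
  norm_cast
  ring

theorem imag_mul_vecMulVec_ofReal_mul_conjTranspose {d : ℕ} {U : Matrix (Fin d) (Fin d) ℂ}
    (hU : U ∈ unitaryGroup (Fin d) ℂ) {w : Fin d → ℝ} (hw : w ⬝ᵥ w = 1) :
    Imag (U * (vecMulVec w w).map Complex.ofReal * Uᴴ) =
      (1 - ‖(fun i => (w i : ℂ)) ⬝ᵥ (Uᵀ * U) *ᵥ (fun i => (w i : ℂ))‖ ^ 2) / 2 := by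
  set ŵ : Fin d → ℂ := fun i => (w i : ℂ)
  have hstar : star ŵ = ŵ := funext fun i => Complex.conj_ofReal (w i)
  have hρ : U * (vecMulVec w w).map Complex.ofReal * Uᴴ = vecMulVec (U *ᵥ ŵ) (star (U *ᵥ ŵ)) := by
    have hmap : (vecMulVec w w).map Complex.ofReal = vecMulVec ŵ ŵ := by
      ext i j
      simp [ŵ, vecMulVec_apply]
    rw [hmap, star_mulVec, hstar, mul_vecMulVec, vecMulVec_mul]
  have hnorm : star (U *ᵥ ŵ) ⬝ᵥ U *ᵥ ŵ = 1 := by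
    rw [star_mulVec, ← dotProduct_mulVec, mulVec_mulVec, ← star_eq_conjTranspose,
      mem_unitaryGroup_iff'.mp hU, one_mulVec, hstar]
    simpa [ŵ, dotProduct] using congrArg Complex.ofReal hw
  rw [hρ, imag_vecMulVec_star hnorm, mulVec_dotProduct_eq_dotProduct_transpose_mulVec,
    mulVec_mulVec]

instance (d : ℕ) : BorelSpace (Matrix.orthogonalGroup (Fin d) ℝ) := ⟨rfl⟩

theorem IGP_pure_states_general
    (d : ℕ)
    (U : Matrix (Fin d) (Fin d) ℂ) (hU : U ∈ Matrix.unitaryGroup (Fin d) ℂ)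
    (v : Fin d → ℝ) (hv : ∑ i, v i ^ 2 = 1)
    (μ : Measure (Matrix.orthogonalGroup (Fin d) ℝ))
    [μ.IsHaarMeasure] [IsProbabilityMeasure μ] :
    ∫ O : Matrix.orthogonalGroup (Fin d) ℝ,
        Imag (U * (Matrix.vecMulVec ((O : Matrix (Fin d) (Fin d) ℝ).mulVec v)
              ((O : Matrix (Fin d) (Fin d) ℝ).mulVec v)).map Complex.ofReal * Uᴴ) ∂μ
      = ((d : ℝ) ^ 2 - ‖(Uᴴ * U.map (starRingEnd ℂ)).trace‖ ^ 2) /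
          (2 * d * (d + 2)) := by
  set M := Uᵀ * U
  have hM : M.IsSymm := by simp [M, IsSymm, transpose_mul]
  have hMU : M ∈ unitaryGroup (Fin d) ℂ := mul_mem (transpose_mem_unitaryGroup_iff.mpr hU) hU
  have hv' : v ⬝ᵥ v = 1 := by simpa [dotProduct, sq] using hv
  have hpoint (O : orthogonalGroup (Fin d) ℝ) :
      Imag (U * (vecMulVec (O.1 *ᵥ v) (O.1 *ᵥ v)).map Complex.ofReal * Uᴴ) =
        (1 - ((O.1 *ᵥ v ⬝ᵥ M.map Complex.re *ᵥ (O.1 *ᵥ v)) ^ 2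
          + (O.1 *ᵥ v ⬝ᵥ M.map Complex.im *ᵥ (O.1 *ᵥ v)) ^ 2)) / 2 := by
    rw [imag_mul_vecMulVec_ofReal_mul_conjTranspose hU
      ((mulVec_dotProduct_mulVec_of_mem_orthogonalGroup O.2 v).trans hv'),
      norm_dotProduct_mulVec_ofReal_sq]
  simp_rw [hpoint]
  rw [integral_div, integral_sub (integrable_const _), integral_add,
    integral_dotProduct_mulVec_sq μ hv' (hM.map _), integral_dotProduct_mulVec_sq μ hv' (hM.map _)]
  · have hd0 : (d : ℝ) ≠ 0 := Nat.cast_ne_zero.mpr (by rintro rfl; simp at hv)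
    have hre_im := trace_map_re_sq_add_trace_map_im_sq M
    have hsum := hM.trace_map_re_mul_add_trace_map_im_mul hMU
    rw [Fintype.card_fin] at hsum
    rw [integral_const, probReal_univ, smul_eq_mul, mul_one, Fintype.card_fin,
      norm_trace_conjTranspose_mul_map_conj, ← hre_im]
    field_simp
    linear_combination (-2 : ℝ) * hsum
  all_goals exact Continuous.integrable_of_compactSpace (by fun_prop)

/-- **Imaginarity-generating power on real pure states.**
For `d ≥ 2`, a `d×d` unitary `U` and a real unit vector `v`, the Haar average over the
orthogonal group of the imaginarity of `U (Ov)(Ov)ᵀ U†` equals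
`(d² − |Tr(U†U*)|²)/(2d(d+2))`. -/
theorem IGP_pure_states
    (d : ℕ) (hd : 2 ≤ d)
    (U : Matrix (Fin d) (Fin d) ℂ) (hU : U ∈ Matrix.unitaryGroup (Fin d) ℂ)
    (v : Fin d → ℝ) (hv : ∑ i, v i ^ 2 = 1)
    (μ : Measure (Matrix.orthogonalGroup (Fin d) ℝ))
    [μ.IsHaarMeasure] [IsProbabilityMeasure μ] :
    ∫ O : Matrix.orthogonalGroup (Fin d) ℝ,
        Imag (U * (Matrix.vecMulVec ((O : Matrix (Fin d) (Fin d) ℝ).mulVec v)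
              ((O : Matrix (Fin d) (Fin d) ℝ).mulVec v)).map Complex.ofReal * Uᴴ) ∂μ
      = ((d : ℝ) ^ 2 - ‖(Uᴴ * U.map (starRingEnd ℂ)).trace‖ ^ 2) /
          (2 * d * (d + 2)) :=
  IGP_pure_states_general d U hU v hv μ
end
end

section
/- Let U be a d×d complex unitary matrix and let ρ be a d×d real symmetric matrix, regarded as a complex matrix. Setting M = U†U*, one has I(U ρ U†) = (1/2)·(Tr(ρ²) − Tr(M* ρ M ρ)). -/
open Matrix

noncomputable section

/-- For a unitary `U` and a real symmetric matrix `ρ` (regarded as complex), with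
`M = U†U*`, one has `I(UρU†) = (1/2)(Tr(ρ²) − Tr(M*ρMρ))`. -/
theorem imag_conj_unitary_eq
    (d : ℕ) (U : Matrix (Fin d) (Fin d) ℂ) (hU : U ∈ Matrix.unitaryGroup (Fin d) ℂ)
    (ρr : Matrix (Fin d) (Fin d) ℝ) (hρ : ρr.IsSymm)
    (ρ : Matrix (Fin d) (Fin d) ℂ) (hρC : ρ = ρr.map Complex.ofReal)
    (M : Matrix (Fin d) (Fin d) ℂ) (hM : M = Uᴴ * U.map (starRingEnd ℂ)) :
    Imag (U * ρ * Uᴴ) =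
      (1 / 2) * (((ρ * ρ).trace).re - ((M.map (starRingEnd ℂ) * ρ * M * ρ).trace).re) := by
  have hUU : Uᴴ * U = 1 := by
    have := (Matrix.mem_unitaryGroup_iff'.mp hU)
    simpa [Matrix.star_eq_conjTranspose] using this
  set Uc : Matrix (Fin d) (Fin d) ℂ := U.map (starRingEnd ℂ) with hUc
  have hρt : ρᵀ = ρ := by
    subst hρC
    rw [← Matrix.transpose_map]
    rw [hρ]
  have hρh : ρᴴ = ρ := by
    ext i j
    simp only [hρC, Matrix.conjTranspose_apply, Matrix.map_apply, Complex.star_def,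
      Complex.conj_ofReal]
    exact_mod_cast congrFun (congrFun hρ i) j
  set σ : Matrix (Fin d) (Fin d) ℂ := U * ρ * Uᴴ with hσ
  have hσH : σᴴ = σ := by
    simp [hσ, Matrix.conjTranspose_mul, hρh, Matrix.mul_assoc]
  have hσtH : (σᵀ)ᴴ = σᵀ := by
    ext i j
    simp only [Matrix.conjTranspose_apply, Matrix.transpose_apply]
    have := congrFun (congrFun hσH j) i
    simpa [Matrix.conjTranspose_apply] using this
  have hσt : σᵀ = Uc * ρ * Uᵀ := by
    have hUct : Uᴴᵀ = Uc := by
      ext i j; simp [hUc, Matrix.conjTranspose_apply, Matrix.map_apply]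
    rw [hσ, Matrix.transpose_mul, Matrix.transpose_mul, hUct, hρt, Matrix.mul_assoc]
  have trace_conj : ∀ A : Matrix (Fin d) (Fin d) ℂ, (U * A * Uᴴ).trace = A.trace := by
    intro A
    rw [Matrix.trace_mul_cycle, hUU, Matrix.one_mul]
  have conjmul : ∀ A B : Matrix (Fin d) (Fin d) ℂ,
      (U * A * Uᴴ) * (U * B * Uᴴ) = U * (A * B) * Uᴴ := by
    intro A B
    calc (U * A * Uᴴ) * (U * B * Uᴴ) = U * (A * (Uᴴ * (U * (B * Uᴴ)))) := by
          simp only [Matrix.mul_assoc]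
      _ = U * (A * (B * Uᴴ)) := by rw [← Matrix.mul_assoc Uᴴ U, hUU, Matrix.one_mul]
      _ = U * (A * B) * Uᴴ := by simp only [Matrix.mul_assoc]
  have hMc : M.map (starRingEnd ℂ) = Uᵀ * U := by
    subst hM
    ext i j
    simp [hUc, Matrix.mul_apply, Matrix.map_apply, Matrix.conjTranspose_apply, map_sum]
  -- the four trace computations
  have e1 : (σ * σ).trace = (ρ * ρ).trace := by
    rw [hσ, conjmul, trace_conj]
  have e4 : (σᵀ * σᵀ).trace = (ρ * ρ).trace := by
    rw [← Matrix.transpose_mul, Matrix.trace_transpose, e1]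
  have e2 : (σ * σᵀ).trace = (M.map (starRingEnd ℂ) * ρ * M * ρ).trace := by
    rw [hσt, hσ, hMc, hM]
    calc (U * ρ * Uᴴ * (Uc * ρ * Uᵀ)).trace
        = ((U * (ρ * (Uᴴ * (Uc * ρ)))) * Uᵀ).trace := by
          simp only [Matrix.mul_assoc]
      _ = (Uᵀ * (U * (ρ * (Uᴴ * (Uc * ρ))))).trace := by rw [Matrix.trace_mul_comm]
      _ = (Uᵀ * U * ρ * (Uᴴ * Uc) * ρ).trace := by simp only [Matrix.mul_assoc]
  have e3 : (σᵀ * σ).trace = (M.map (starRingEnd ℂ) * ρ * M * ρ).trace := by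
    rw [Matrix.trace_mul_comm, e2]
  -- expansion
  have expand : (σ - σᵀ)ᴴ * (σ - σᵀ) = σ * σ - σ * σᵀ - σᵀ * σ + σᵀ * σᵀ := by
    rw [Matrix.conjTranspose_sub, hσH, hσtH]
    noncomm_ring
  have hT : ((σ - σᵀ)ᴴ * (σ - σᵀ)).trace
      = (ρ * ρ).trace - (M.map (starRingEnd ℂ) * ρ * M * ρ).trace
        - (M.map (starRingEnd ℂ) * ρ * M * ρ).trace + (ρ * ρ).trace := by
    rw [expand, Matrix.trace_add, Matrix.trace_sub, Matrix.trace_sub, e1, e2, e3, e4]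
  show (1 / 4 : ℝ) * (((σ - σᵀ)ᴴ * (σ - σᵀ)).trace).re
      = (1 / 2) * (((ρ * ρ).trace).re - ((M.map (starRingEnd ℂ) * ρ * M * ρ).trace).re)
  rw [hT]
  simp only [Complex.add_re, Complex.sub_re]
  ring
end
end

section
/- For every d×d complex unitary matrix U one has |Tr(U†U*)| ≤ d, and equality |Tr(U†U*)| = d holds if and only if there exist θ ∈ ℝ and a d×d real orthogonal matrix O such that U = e^{iθ}·O. Consequently the imaginarity-generating power Ī(U) = (d² − |Tr(U†U*)|²)/(2d(d+2)) satisfies Ī(U) ≥ 0, with Ī(U) = 0 if and only if U equals a real orthogonal matrix up to a global phase. -/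
/-! Tr(U†U*) is the Frobenius inner product ⟨U, Ū⟩, and for unitary `U` both `U` and `Ū` have
Frobenius norm √d, so Cauchy–Schwarz gives |Tr(U†U*)| ≤ d, with equality iff `Ū = r U` for
some `|r| = 1`. Choosing `e^{iθ}` with `e^{-2iθ} = r` makes `e^{-iθ} U` invariant under
conjugation, i.e. real, and a real unitary matrix is orthogonal. -/

open Matrix

noncomputable section

/-- The imaginarity-generating power of a `d×d` unitary `U`:
`Ī(U) = (d² − |Tr(U†U*)|²)/(2d(d+2))`. -/
def IGP {d : ℕ} (U : Matrix (Fin d) (Fin d) ℂ) : ℝ :=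
  ((d : ℝ) ^ 2 - ‖(Uᴴ * U.map (starRingEnd ℂ)).trace‖ ^ 2) / (2 * d * (d + 2))

open ComplexConjugate WithLp
open scoped InnerProductSpace

theorem Complex.conj_exp_ofReal_mul_I_mul_self (θ : ℝ) :
    conj (Complex.exp (θ * Complex.I)) * Complex.exp (θ * Complex.I) = 1 := by
  rw [Complex.conj_mul', Complex.norm_exp_ofReal_mul_I]; simp

namespace Matrix

variable {m n : Type*}

section Frobenius

variable {𝕜 : Type*} [Fintype m] [Fintype n] [RCLike 𝕜]

theorem inner_toLp_vec (A B : Matrix m n 𝕜) :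
    ⟪toLp 2 A.vec, toLp 2 B.vec⟫_𝕜 = (Aᴴ * B).trace := by
  rw [EuclideanSpace.inner_toLp_toLp, dotProduct_comm, star_vec_dotProduct_vec]

theorem norm_toLp_vec_map_conj (A : Matrix m n 𝕜) :
    ‖toLp 2 (A.map conj).vec‖ = ‖toLp 2 A.vec‖ := by
  simp only [EuclideanSpace.norm_eq, vec_map, Function.comp_apply, RCLike.norm_conj]

theorem norm_toLp_vec_sq_of_mem_unitaryGroup [DecidableEq n] {U : Matrix n n 𝕜}
    (hU : U ∈ unitaryGroup n 𝕜) : ‖toLp 2 U.vec‖ ^ 2 = Fintype.card n := by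
  rw [← RCLike.ofReal_inj (K := 𝕜), RCLike.ofReal_pow, ← inner_self_eq_norm_sq_to_K,
    inner_toLp_vec, ← star_eq_conjTranspose, mem_unitaryGroup_iff'.mp hU, trace_one]
  simp

theorem norm_toLp_vec_mul_norm_toLp_vec_map_conj [DecidableEq n] {U : Matrix n n 𝕜}
    (hU : U ∈ unitaryGroup n 𝕜) :
    ‖toLp 2 U.vec‖ * ‖toLp 2 (U.map conj).vec‖ = Fintype.card n := by
  rw [norm_toLp_vec_map_conj, ← sq, norm_toLp_vec_sq_of_mem_unitaryGroup hU]

end Frobenius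

theorem smul_mem_unitaryGroup_iff {α : Type*} [Fintype n] [DecidableEq n] [CommRing α]
    [StarRing α] {u : α} (hu : star u * u = 1) {A : Matrix n n α} :
    u • A ∈ unitaryGroup n α ↔ A ∈ unitaryGroup n α := by
  rw [mem_unitaryGroup_iff', mem_unitaryGroup_iff', star_smul, smul_mul_smul_comm, hu, one_smul]

theorem map_ofReal_mem_unitaryGroup_iff [Fintype n] [DecidableEq n] {O : Matrix n n ℝ} :
    O.map Complex.ofReal ∈ unitaryGroup n ℂ ↔ O ∈ orthogonalGroup n ℝ := by
  have hstar : star (O.map Complex.ofReal) = (star O).map Complex.ofReal :=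
    (conjTranspose_map _ fun x => by simp).symm
  have hmul : (O * star O).map Complex.ofReal =
      O.map Complex.ofReal * (star O).map Complex.ofReal :=
    Matrix.map_mul (f := Complex.ofRealHom)
  rw [mem_unitaryGroup_iff, mem_orthogonalGroup_iff, hstar, ← hmul,
    ← (map_injective Complex.ofReal_injective).eq_iff,
    Matrix.map_one _ Complex.ofReal_zero Complex.ofReal_one]
  rfl

theorem exists_smul_map_ofReal_of_map_conj_eq_smul (A : Matrix m n ℂ) {r : ℂ} (hr : ‖r‖ = 1)
    (h : A.map conj = r • A) :
    ∃ (θ : ℝ) (B : Matrix m n ℝ), A = Complex.exp (θ * Complex.I) • B.map Complex.ofReal := by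
  set u := Complex.exp (↑(-r.arg / 2) * Complex.I)
  have hu : conj u * u = 1 := Complex.conj_exp_ofReal_mul_I_mul_self _
  have hur : u * r = conj u := by
    have hsq : u ^ 2 * r = 1 := by
      have := Complex.norm_mul_exp_arg_mul_I r
      rw [hr, Complex.ofReal_one, one_mul] at this
      rw [← this, ← Complex.exp_nat_mul, ← Complex.exp_add]
      push_cast; ring_nf; exact Complex.exp_zero
    linear_combination (conj u) * hsq - r * u * hu
  have hreal : ∀ i j, ((conj u * A i j).re : ℂ) = conj u * A i j := by
    intro i j
    have hij : conj (A i j) = r * A i j := congrFun (congrFun h i) j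
    rw [← Complex.conj_eq_iff_re, map_mul, Complex.conj_conj, hij]
    linear_combination A i j * hur
  refine ⟨-r.arg / 2, (conj u • A).map Complex.re, ?_⟩
  ext i j
  simp only [smul_apply, map_apply, smul_eq_mul, hreal]
  linear_combination (-(A i j)) * hu

theorem map_conj_smul_map_ofReal {u : ℂ} (hu : conj u * u = 1) (B : Matrix m n ℝ) :
    (u • B.map Complex.ofReal).map conj = conj u ^ 2 • (u • B.map Complex.ofReal) := by
  ext i j
  simp only [map_apply, smul_apply, smul_eq_mul, map_mul, Complex.conj_ofReal]
  linear_combination (-(conj u * B i j)) * hu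

variable [Fintype n] [DecidableEq n]

theorem norm_trace_conjTranspose_mul_map_conj_le {U : Matrix n n ℂ}
    (hU : U ∈ unitaryGroup n ℂ) : ‖(Uᴴ * U.map conj).trace‖ ≤ Fintype.card n := by
  rw [← inner_toLp_vec, ← norm_toLp_vec_mul_norm_toLp_vec_map_conj hU]
  exact norm_inner_le_norm _ _

theorem norm_trace_conjTranspose_mul_map_conj_eq_card_iff {U : Matrix n n ℂ}
    (hU : U ∈ unitaryGroup n ℂ) :
    ‖(Uᴴ * U.map conj).trace‖ = Fintype.card n ↔
      ∃ (θ : ℝ) (O : Matrix n n ℝ), O ∈ orthogonalGroup n ℝ ∧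
        U = Complex.exp (θ * Complex.I) • O.map Complex.ofReal := by
  cases isEmpty_or_nonempty n
  · simpa using ⟨0, 1, one_mem _, Subsingleton.elim _ _⟩
  have hx : toLp 2 U.vec ≠ 0 := by
    rw [← norm_ne_zero_iff, ← pow_ne_zero_iff two_ne_zero,
      norm_toLp_vec_sq_of_mem_unitaryGroup hU]
    exact_mod_cast Fintype.card_ne_zero
  have hy : toLp 2 (U.map conj).vec ≠ 0 := by
    rwa [← norm_ne_zero_iff, norm_toLp_vec_map_conj, norm_ne_zero_iff]
  rw [← inner_toLp_vec, ← norm_toLp_vec_mul_norm_toLp_vec_map_conj hU,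
    norm_inner_eq_norm_iff hx hy]
  constructor
  · rintro ⟨r, -, hr⟩
    have hr1 : ‖r‖ = 1 := by
      have := congrArg norm hr
      rw [norm_smul, norm_toLp_vec_map_conj] at this
      exact (mul_eq_right₀ (norm_ne_zero_iff.mpr hx)).mp this.symm
    have hUr : U.map conj = r • U := by
      rw [← vec_inj, vec_smul, ← WithLp.toLp_injective 2 |>.eq_iff, WithLp.toLp_smul]
      exact hr
    obtain ⟨θ, O, rfl⟩ := exists_smul_map_ofReal_of_map_conj_eq_smul U hr1 hUr
    refine ⟨θ, O, ?_, rfl⟩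
    rwa [← map_ofReal_mem_unitaryGroup_iff,
      ← smul_mem_unitaryGroup_iff (Complex.conj_exp_ofReal_mul_I_mul_self θ)]
  · rintro ⟨θ, O, -, rfl⟩
    refine ⟨conj (Complex.exp (θ * Complex.I)) ^ 2, by simp, ?_⟩
    rw [map_conj_smul_map_ofReal (Complex.conj_exp_ofReal_mul_I_mul_self θ), vec_smul,
      WithLp.toLp_smul]

end Matrix

section IGP

variable {d : ℕ} {U : Matrix (Fin d) (Fin d) ℂ}

theorem IGP_nonneg (hU : U ∈ unitaryGroup (Fin d) ℂ) : 0 ≤ IGP U := by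
  have hle := norm_trace_conjTranspose_mul_map_conj_le hU
  rw [Fintype.card_fin] at hle
  unfold IGP
  have := pow_le_pow_left₀ (norm_nonneg _) hle 2
  exact div_nonneg (by linarith) (by positivity)

theorem IGP_eq_zero_iff : IGP U = 0 ↔ ‖(Uᴴ * U.map conj).trace‖ = d := by
  obtain rfl | hd := Nat.eq_zero_or_pos d
  · simp [IGP]
  have hden : 2 * (d : ℝ) * (d + 2) ≠ 0 := by positivity
  rw [IGP, div_eq_zero_iff, or_iff_left hden, sub_eq_zero, eq_comm,
    pow_left_inj₀ (norm_nonneg _) (Nat.cast_nonneg d) two_ne_zero]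

end IGP

/-- **Positivity and faithfulness of the imaginarity-generating power.**
For every unitary `U`: `|Tr(U†U*)| ≤ d`, with equality iff `U = e^{iθ}·O` for some `θ ∈ ℝ`
and real orthogonal `O`; consequently `Ī(U) ≥ 0`, with `Ī(U) = 0` iff `U` is a real
orthogonal matrix up to a global phase. -/
theorem IGP_positive_faithful
    (d : ℕ) (U : Matrix (Fin d) (Fin d) ℂ) (hU : U ∈ Matrix.unitaryGroup (Fin d) ℂ) :
    ‖(Uᴴ * U.map (starRingEnd ℂ)).trace‖ ≤ d ∧
    (‖(Uᴴ * U.map (starRingEnd ℂ)).trace‖ = d ↔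
      ∃ (θ : ℝ) (O : Matrix (Fin d) (Fin d) ℝ), O ∈ Matrix.orthogonalGroup (Fin d) ℝ ∧
        U = Complex.exp (θ * Complex.I) • O.map Complex.ofReal) ∧
    0 ≤ IGP U ∧
    (IGP U = 0 ↔
      ∃ (θ : ℝ) (O : Matrix (Fin d) (Fin d) ℝ), O ∈ Matrix.orthogonalGroup (Fin d) ℝ ∧
        U = Complex.exp (θ * Complex.I) • O.map Complex.ofReal) := by
  have hle := norm_trace_conjTranspose_mul_map_conj_le hU
  have heq := norm_trace_conjTranspose_mul_map_conj_eq_card_iff hU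
  rw [Fintype.card_fin] at hle heq
  exact ⟨hle, heq, IGP_nonneg hU, IGP_eq_zero_iff.trans heq⟩
end
end

section
/- Let d ≥ 2, let U be a d×d complex unitary matrix, let ρ be a real density matrix, let {q_i}_{i=1}^{M} and {p_j}_{j=1}^{N} be finite probability distributions (nonnegative weights summing to 1), and let {O_i}_{i=1}^{M} and {Õ_j}_{j=1}^{N} be d×d real orthogonal matrices. Then Σ_{i,j} q_i p_j ∫_{O(d)} I((O_i U Õ_j)(O ρ Oᵀ)(O_i U Õ_j)†) dμ_O(O) = ∫_{O(d)} I(U (O ρ Oᵀ) U†) dμ_O(O); that is, the orthogonal-Haar-averaged imaginarity is preserved on average under real-orthogonal pre- and post-processing. -/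
open MeasureTheory Matrix

noncomputable section

lemma imag_conj {d : ℕ} (A X : Matrix (Fin d) (Fin d) ℂ)
    (hA : Aᴴ * A = 1) (hAreal : Aᴴ = Aᵀ) :
    Imag (A * X * Aᴴ) = Imag X := by
  unfold Imag
  have h1 : (A * X * Aᴴ)ᵀ = A * Xᵀ * Aᴴ := by
    rw [transpose_mul, transpose_mul, hAreal, transpose_transpose, ← hAreal, mul_assoc]
  have h2 : A * X * Aᴴ - (A * X * Aᴴ)ᵀ = A * (X - Xᵀ) * Aᴴ := by
    rw [h1, Matrix.mul_sub, Matrix.sub_mul]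
  rw [h2]
  set D := X - Xᵀ
  have h3 : ((A * D * Aᴴ)ᴴ * (A * D * Aᴴ)) = A * (Dᴴ * D) * Aᴴ := by
    rw [conjTranspose_mul, conjTranspose_mul, conjTranspose_conjTranspose]
    calc A * (Dᴴ * Aᴴ) * (A * D * Aᴴ) = A * Dᴴ * (Aᴴ * A) * D * Aᴴ := by
          noncomm_ring
      _ = A * (Dᴴ * D) * Aᴴ := by rw [hA]; noncomm_ring
  rw [h3, Matrix.trace_mul_cycle, ← mul_assoc, hA, one_mul]

lemma map_conjTranspose_eq {d : ℕ} (B : Matrix (Fin d) (Fin d) ℝ) :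
    (B.map Complex.ofReal)ᴴ = (B.map Complex.ofReal)ᵀ := by
  ext i j
  simp [conjTranspose_apply, Matrix.map_apply]

lemma map_orth_unitary {d : ℕ} (B : Matrix (Fin d) (Fin d) ℝ)
    (hB : B ∈ Matrix.orthogonalGroup (Fin d) ℝ) :
    (B.map Complex.ofReal)ᴴ * (B.map Complex.ofReal) = 1 := by
  have h : Bᵀ * B = 1 := by
    have := (Matrix.mem_orthogonalGroup_iff' (Fin d) ℝ).mp hB
    simpa [Matrix.star_eq_conjTranspose, Matrix.conjTranspose] using this
  rw [map_conjTranspose_eq, ← Matrix.transpose_map]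
  have h2 : (Bᵀ.map Complex.ofReal) * (B.map Complex.ofReal)
      = ((Bᵀ * B).map Complex.ofReal) :=
    (Matrix.map_mul (f := Complex.ofRealHom)).symm
  rw [h2, h]
  simp [Matrix.map_one]

/-- **The Haar-averaged imaginarity is preserved on average under free superoperations.**
For a unitary `U`, a real density matrix `ρ`, probability weights `{q_i}, {p_j}` and real
orthogonal matrices `{O_i}, {Õ_j}`, the average over the mixed ensemble
`{q_i p_j, O_i U Õ_j}` of the orthogonal-Haar-averaged imaginarity equals the one of `U`. -/
theorem haar_avg_imag_invariant_superoperation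
    (d : ℕ) (hd : 2 ≤ d)
    (U : Matrix (Fin d) (Fin d) ℂ) (hU : U ∈ Matrix.unitaryGroup (Fin d) ℂ)
    (ρ : Matrix (Fin d) (Fin d) ℝ) (hρsymm : ρ.IsSymm) (hρpsd : ρ.PosSemidef)
    (hρtr : ρ.trace = 1)
    (M N : ℕ) (q : Fin M → ℝ) (p : Fin N → ℝ)
    (hq0 : ∀ i, 0 ≤ q i) (hq1 : ∑ i, q i = 1)
    (hp0 : ∀ j, 0 ≤ p j) (hp1 : ∑ j, p j = 1)
    (Os : Fin M → Matrix (Fin d) (Fin d) ℝ)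
    (hOs : ∀ i, Os i ∈ Matrix.orthogonalGroup (Fin d) ℝ)
    (Ot : Fin N → Matrix (Fin d) (Fin d) ℝ)
    (hOt : ∀ j, Ot j ∈ Matrix.orthogonalGroup (Fin d) ℝ)
    (μ : Measure (Matrix.orthogonalGroup (Fin d) ℝ))
    [μ.IsHaarMeasure] [IsProbabilityMeasure μ] :
    ∑ i : Fin M, ∑ j : Fin N, q i * p j *
        ∫ O : Matrix.orthogonalGroup (Fin d) ℝ,
          Imag (((Os i).map Complex.ofReal * U * (Ot j).map Complex.ofReal) *
              (((O : Matrix (Fin d) (Fin d) ℝ).map Complex.ofReal) * (ρ.map Complex.ofReal) *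
                ((O : Matrix (Fin d) (Fin d) ℝ).map Complex.ofReal)ᵀ) *
              ((Os i).map Complex.ofReal * U * (Ot j).map Complex.ofReal)ᴴ) ∂μ
      = ∫ O : Matrix.orthogonalGroup (Fin d) ℝ,
          Imag (U * (((O : Matrix (Fin d) (Fin d) ℝ).map Complex.ofReal) *
              (ρ.map Complex.ofReal) *
              ((O : Matrix (Fin d) (Fin d) ℝ).map Complex.ofReal)ᵀ) * Uᴴ) ∂μ := by

  classical
  set ρc : Matrix (Fin d) (Fin d) ℂ := ρ.map Complex.ofReal with hρc
  set F : Matrix.orthogonalGroup (Fin d) ℝ → ℝ := fun O =>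
    Imag (U * (((O : Matrix (Fin d) (Fin d) ℝ).map Complex.ofReal) * ρc *
      ((O : Matrix (Fin d) (Fin d) ℝ).map Complex.ofReal)ᵀ) * Uᴴ) with hF
  have key : ∀ (i : Fin M) (j : Fin N),
      (∫ O : Matrix.orthogonalGroup (Fin d) ℝ,
          Imag (((Os i).map Complex.ofReal * U * (Ot j).map Complex.ofReal) *
              (((O : Matrix (Fin d) (Fin d) ℝ).map Complex.ofReal) * ρc *
                ((O : Matrix (Fin d) (Fin d) ℝ).map Complex.ofReal)ᵀ) *
              ((Os i).map Complex.ofReal * U * (Ot j).map Complex.ofReal)ᴴ) ∂μ)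
      = ∫ O, F O ∂μ := by
    intro i j
    set A : Matrix (Fin d) (Fin d) ℂ := (Os i).map Complex.ofReal with hA
    set B : Matrix (Fin d) (Fin d) ℂ := (Ot j).map Complex.ofReal with hB
    set g : Matrix.orthogonalGroup (Fin d) ℝ := ⟨Ot j, hOt j⟩ with hg
    have hpt : ∀ O : Matrix.orthogonalGroup (Fin d) ℝ,
        Imag ((A * U * B) *
            (((O : Matrix (Fin d) (Fin d) ℝ).map Complex.ofReal) * ρc *
              ((O : Matrix (Fin d) (Fin d) ℝ).map Complex.ofReal)ᵀ) *
            (A * U * B)ᴴ) = F (g * O) := by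
      intro O
      set Oc : Matrix (Fin d) (Fin d) ℂ :=
        ((O : Matrix (Fin d) (Fin d) ℝ).map Complex.ofReal) with hOc
      have hcoe : ((g * O : Matrix.orthogonalGroup (Fin d) ℝ) :
          Matrix (Fin d) (Fin d) ℝ) = Ot j * (O : Matrix (Fin d) (Fin d) ℝ) := rfl
      have hmapmul : ((Ot j * (O : Matrix (Fin d) (Fin d) ℝ)).map Complex.ofReal)
          = B * Oc := Matrix.map_mul (f := Complex.ofRealHom)
      have hrearr : (A * U * B) * (Oc * ρc * Ocᵀ) * (A * U * B)ᴴ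
          = A * (U * ((B * Oc) * ρc * (B * Oc)ᵀ) * Uᴴ) * Aᴴ := by
        simp only [conjTranspose_mul, transpose_mul]
        rw [map_conjTranspose_eq (Ot j)]
        rw [show Ocᵀ = Ocᴴ from (map_conjTranspose_eq _).symm]
        noncomm_ring
      rw [hrearr, imag_conj A _ (map_orth_unitary _ (hOs i)) (map_conjTranspose_eq _)]
      simp only [hF, hcoe, hmapmul]
    have hfun : (fun O : Matrix.orthogonalGroup (Fin d) ℝ =>
        Imag ((A * U * B) *
            (((O : Matrix (Fin d) (Fin d) ℝ).map Complex.ofReal) * ρc *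
              ((O : Matrix (Fin d) (Fin d) ℝ).map Complex.ofReal)ᵀ) *
            (A * U * B)ᴴ)) = fun O => F (g * O) := funext hpt
    rw [hfun, MeasureTheory.integral_mul_left_eq_self F g]
  simp_rw [key]
  simp_rw [mul_assoc, ← Finset.mul_sum, ← Finset.sum_mul, hp1, hq1, one_mul]
end
end

section
/- Every d×d complex unitary matrix U can be written as U = O₁ D O₂, where O₁ and O₂ are d×d real orthogonal matrices (regarded as complex matrices) and D is a diagonal unitary matrix, i.e., a diagonal complex matrix all of whose diagonal entries have modulus 1. -/
/-!
`S = U Uᵀ` is a symmetric unitary matrix, so its real and imaginary parts are commuting real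
symmetric matrices (`S` commutes with `S̄ = S⁻¹`). Diagonalizing them simultaneously by a real
orthogonal `O` gives `S = O Λ Oᵀ` with `Λ` diagonal unitary. With `Z` a diagonal square root of
`Λ` and `W = O Z`, we have `W Wᵀ = S`, so `V = Wᴴ U` satisfies `V Vᵀ = 1`; a unitary `V` with
`V Vᵀ = 1` has `V̄ = V`, i.e. is real orthogonal, and `U = O Z V`.
-/

open Matrix Complex

theorem RCLike.mem_unitary_iff_norm_eq_one {𝕜 : Type*} [RCLike 𝕜] {z : 𝕜} :
    z ∈ unitary 𝕜 ↔ ‖z‖ = 1 := by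
  rw [Unitary.mem_iff_star_mul_self, RCLike.star_def, RCLike.conj_mul]
  norm_cast
  exact pow_eq_one_iff_of_nonneg (norm_nonneg z) two_ne_zero

namespace Matrix

variable {n : Type*}

theorem star_map_ofReal (M : Matrix n n ℝ) : star (M.map ofReal) = (M.map ofReal)ᵀ := by
  ext i j
  simp

theorem map_ofReal_injective : Function.Injective fun M : Matrix n n ℝ => M.map ofReal :=
  map_injective ofReal_injective

theorem map_re_add_I_smul_map_im (S : Matrix n n ℂ) :
    (S.map re).map ofReal + I • (S.map im).map ofReal = S := by
  ext i j
  simp [mul_comm I, re_add_im]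

variable [Fintype n]

theorem map_ofReal_mul (M N : Matrix n n ℝ) :
    (M * N).map ofReal = M.map ofReal * N.map ofReal :=
  Matrix.map_mul (f := ofRealHom)

theorem commute_map_re_map_im {S : Matrix n n ℂ} (h : Commute S (S.map (starRingEnd ℂ))) :
    Commute (S.map re) (S.map im) := by
  set C := S.map (starRingEnd ℂ)
  have hre : (S.map re).map ofReal = (2⁻¹ : ℂ) • (S + C) := by
    ext i j
    simp [C, re_eq_add_conj, div_eq_inv_mul]
  have him : (S.map im).map ofReal = (2 * I)⁻¹ • (S - C) := by
    ext i j
    simp [C, im_eq_sub_conj, div_eq_inv_mul]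
  have hsum : Commute (S + C) (S - C) :=
    ((Commute.refl S).sub_right h).add_left (h.symm.sub_right (Commute.refl C))
  have hc : Commute ((S.map re).map ofReal) ((S.map im).map ofReal) := by
    rw [hre, him]
    exact (hsum.smul_left _).smul_right _
  exact map_ofReal_injective (by simpa only [map_ofReal_mul] using hc.eq)

variable [DecidableEq n]

theorem mul_eq_mul_diagonal_of_mulVec_transpose {R : Type*} [CommSemiring R]
    {A P : Matrix n n R} {μ : n → R} (h : ∀ j, A *ᵥ Pᵀ j = μ j • Pᵀ j) :
    A * P = P * diagonal μ := by
  ext i j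
  rw [mul_diagonal]
  simpa [mulVec, dotProduct, mul_apply, mul_comm] using congrFun (h j) i

theorem IsHermitian.exists_unitary_mul_eq_mul_diagonal_of_commute {𝕜 : Type*} [RCLike 𝕜]
    {A B : Matrix n n 𝕜} (hA : A.IsHermitian) (hB : B.IsHermitian) (hAB : Commute A B) :
    ∃ P ∈ unitaryGroup n 𝕜, ∃ μ ν : n → 𝕜,
      A * P = P * diagonal μ ∧ B * P = P * diagonal ν := by
  have hA' := isSymmetric_toEuclideanLin_iff.mpr hA
  have hB' := isSymmetric_toEuclideanLin_iff.mpr hB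
  set V : 𝕜 × 𝕜 → Submodule 𝕜 (EuclideanSpace 𝕜 n) := fun p =>
    Module.End.eigenspace (toEuclideanLin A) p.2 ⊓ Module.End.eigenspace (toEuclideanLin B) p.1
  have hV : DirectSum.IsInternal V :=
    hA'.directSum_isInternal_of_commute hB' (hAB.map (toLpLinAlgEquiv 2))
  have : Fintype {p // V p ≠ ⊥} := hV.submodule_iSupIndep.fintypeNeBotOfFiniteDimensional
  have hV' : DirectSum.IsInternal fun p : {p // V p ≠ ⊥} => V p :=
    DirectSum.isInternal_ne_bot_iff.mpr hV
  have hOrth : OrthogonalFamily 𝕜 (fun p : {p // V p ≠ ⊥} => V p) fun p => (V p).subtypeₗᵢ :=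
    (hA'.orthogonalFamily_eigenspace_inf_eigenspace hB').comp Subtype.coe_injective
  have hcard : Module.finrank 𝕜 (EuclideanSpace 𝕜 n) = Fintype.card n := finrank_euclideanSpace
  let e := Fintype.equivFin n
  let b := (hV'.subordinateOrthonormalBasis hcard hOrth).reindex e.symm
  let p : n → {p // V p ≠ ⊥} := fun j => hV'.subordinateOrthonormalBasisIndex hcard (e j) hOrth
  have hb : ∀ j, b j ∈ V (p j) := fun j => by
    simpa [b, p] using hV'.subordinateOrthonormalBasis_subordinate hcard (e j) hOrth
  refine ⟨(EuclideanSpace.basisFun n 𝕜).toBasis.toMatrix b.toBasis,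
    (EuclideanSpace.basisFun n 𝕜).toMatrix_orthonormalBasis_mem_unitary b,
    fun j => (p j).1.2, fun j => (p j).1.1, ?_, ?_⟩ <;>
  refine mul_eq_mul_diagonal_of_mulVec_transpose fun j => ?_
  · exact congr(WithLp.ofLp $(Module.End.mem_eigenspace_iff.mp (hb j).1))
  · exact congr(WithLp.ofLp $(Module.End.mem_eigenspace_iff.mp (hb j).2))

theorem diagonal_mem_unitaryGroup_iff {α : Type*} [CommRing α] [StarRing α] {d : n → α} :
    diagonal d ∈ unitaryGroup n α ↔ ∀ i, d i ∈ unitary α := by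
  simp only [mem_unitaryGroup_iff, Unitary.mem_iff_self_mul_star, star_eq_conjTranspose,
    diagonal_conjTranspose, diagonal_mul_diagonal, ← diagonal_one, diagonal_eq_diagonal_iff]
  rfl

theorem star_mul_mul_transpose_eq_one {α : Type*} [CommRing α] [StarRing α]
    {U W : Matrix n n α} (hW : W ∈ unitaryGroup n α) (h : U * Uᵀ = W * Wᵀ) :
    (star W * U) * (star W * U)ᵀ = 1 := by
  calc (star W * U) * (star W * U)ᵀ = (star W * W) * (star W * W)ᵀ := by
        simp only [transpose_mul, ← mul_assoc]
        rw [mul_assoc (star W) U, h, ← mul_assoc]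
    _ = 1 := by rw [mem_unitaryGroup_iff'.mp hW, transpose_one, one_mul]

theorem map_ofReal_mem_unitaryGroup {O : Matrix n n ℝ} (hO : O ∈ orthogonalGroup n ℝ) :
    O.map ofReal ∈ unitaryGroup n ℂ := by
  rw [mem_unitaryGroup_iff, star_map_ofReal, ← transpose_map, ← map_ofReal_mul,
    (mem_orthogonalGroup_iff n ℝ).mp hO, Matrix.map_one _ ofReal_zero ofReal_one]

theorem exists_orthogonal_eq_map_ofReal {V : Matrix n n ℂ} (hV : V ∈ unitaryGroup n ℂ)
    (hVT : V * Vᵀ = 1) : ∃ O ∈ orthogonalGroup n ℝ, V = O.map ofReal := by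
  have hstar : star V = Vᵀ := left_inv_eq_right_inv (mem_unitaryGroup_iff'.mp hV) hVT
  have hreal : (V.map re).map ofReal = V := by
    ext i j
    exact conj_eq_iff_re.mp (congrFun (congrFun hstar j) i)
  refine ⟨V.map re, (mem_orthogonalGroup_iff n ℝ).mpr (map_ofReal_injective ?_), hreal.symm⟩
  change (V.map re * (V.map re)ᵀ).map ofReal = (1 : Matrix n n ℝ).map ofReal
  rw [map_ofReal_mul, transpose_map, hreal, hVT, Matrix.map_one _ ofReal_zero ofReal_one]

theorem exists_orthogonal_diagonal_of_transpose_eq_self {S : Matrix n n ℂ}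
    (hS : S ∈ unitaryGroup n ℂ) (hST : Sᵀ = S) :
    ∃ O ∈ orthogonalGroup n ℝ, ∃ s : n → ℂ, (∀ j, s j ∈ unitary ℂ) ∧
      S = O.map ofReal * diagonal s * (O.map ofReal)ᵀ := by
  have hSym (f : ℂ → ℝ) : (S.map f).IsHermitian := by
    rw [IsHermitian, conjTranspose_eq_transpose_of_trivial, ← transpose_map, hST]
  have hstar : star S = S.map (starRingEnd ℂ) := by
    rw [star_eq_conjTranspose, conjTranspose, hST]
    rfl
  have hcomm : Commute S (S.map (starRingEnd ℂ)) :=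
    hstar ▸ (mem_unitaryGroup_iff.mp hS).trans (mem_unitaryGroup_iff'.mp hS).symm
  obtain ⟨O, hO, μ, ν, hμ, hν⟩ := (hSym re).exists_unitary_mul_eq_mul_diagonal_of_commute
    (hSym im) (commute_map_re_map_im hcomm)
  set P := O.map ofReal
  set s : n → ℂ := fun j => μ j + I * ν j
  have hSP : S * P = P * diagonal s := by
    have hs : diagonal s = (diagonal μ).map ofReal + I • (diagonal ν).map ofReal := by
      ext i j
      rcases eq_or_ne i j with rfl | h <;> simp [s, *]
    rw [← map_re_add_I_smul_map_im S, add_mul, smul_mul_assoc, ← map_ofReal_mul,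
      ← map_ofReal_mul, hμ, hν, map_ofReal_mul, map_ofReal_mul, hs, mul_add, mul_smul_comm]
  have hP := map_ofReal_mem_unitaryGroup hO
  have hs : diagonal s = star P * S * P := by
    rw [mul_assoc, hSP, ← mul_assoc, mem_unitaryGroup_iff'.mp hP, one_mul]
  refine ⟨O, hO, s, diagonal_mem_unitaryGroup_iff.mp
    (hs ▸ mul_mem (mul_mem (Unitary.star_mem hP) hS) hP), ?_⟩
  rw [← star_map_ofReal, hs, ← mul_assoc, ← mul_assoc, mem_unitaryGroup_iff.mp hP, one_mul,
    mul_assoc, mem_unitaryGroup_iff.mp hP, mul_one]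

theorem exists_eq_mul_transpose_of_transpose_eq_self {S : Matrix n n ℂ}
    (hS : S ∈ unitaryGroup n ℂ) (hST : Sᵀ = S) :
    ∃ O ∈ orthogonalGroup n ℝ, ∃ z : n → ℂ, (∀ j, z j ∈ unitary ℂ) ∧
      S = (O.map ofReal * diagonal z) * (O.map ofReal * diagonal z)ᵀ := by
  obtain ⟨O, hO, s, hs, rfl⟩ := exists_orthogonal_diagonal_of_transpose_eq_self hS hST
  choose z hz using fun j => IsAlgClosed.exists_pow_nat_eq (s j) two_pos
  refine ⟨O, hO, z, fun j => ?_, ?_⟩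
  · have h := RCLike.mem_unitary_iff_norm_eq_one.mp (hs j)
    rw [← hz, norm_pow, pow_eq_one_iff_of_nonneg (norm_nonneg _) two_ne_zero] at h
    exact RCLike.mem_unitary_iff_norm_eq_one.mpr h
  · have hzz : diagonal s = diagonal z * (diagonal z)ᵀ := by
      rw [diagonal_transpose, diagonal_mul_diagonal]
      simp only [← sq, hz]
    rw [hzz, transpose_mul]
    simp only [mul_assoc]

end Matrix

/-- **Orthogonal–diagonal–orthogonal decomposition of unitaries.**
Every `d×d` complex unitary `U` can be written as `U = O₁ D O₂` with `O₁, O₂` real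
orthogonal and `D` a diagonal unitary (diagonal, all diagonal entries of modulus 1). -/
theorem unitary_eq_orthogonal_diagonal_orthogonal
    (d : ℕ) (U : Matrix (Fin d) (Fin d) ℂ) (hU : U ∈ Matrix.unitaryGroup (Fin d) ℂ) :
    ∃ (O₁ O₂ : Matrix (Fin d) (Fin d) ℝ) (D : Matrix (Fin d) (Fin d) ℂ),
      O₁ ∈ Matrix.orthogonalGroup (Fin d) ℝ ∧ O₂ ∈ Matrix.orthogonalGroup (Fin d) ℝ ∧
      D.IsDiag ∧ (∀ i, ‖D i i‖ = 1) ∧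
      U = O₁.map Complex.ofReal * D * O₂.map Complex.ofReal := by
  obtain ⟨O₁, hO₁, z, hz, hUUT⟩ := exists_eq_mul_transpose_of_transpose_eq_self
    (mul_mem hU (transpose_mem_unitaryGroup_iff.mpr hU)) (by rw [transpose_mul, transpose_transpose])
  set W := O₁.map ofReal * diagonal z
  have hW : W ∈ unitaryGroup (Fin d) ℂ :=
    mul_mem (map_ofReal_mem_unitaryGroup hO₁) (diagonal_mem_unitaryGroup_iff.mpr hz)
  obtain ⟨O₂, hO₂, hV⟩ := exists_orthogonal_eq_map_ofReal (mul_mem (Unitary.star_mem hW) hU)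
    (star_mul_mul_transpose_eq_one hW hUUT)
  refine ⟨O₁, O₂, diagonal z, hO₁, hO₂, isDiag_diagonal z,
    fun i => by simpa using CStarRing.norm_of_mem_unitary (hz i), ?_⟩
  rw [← hV, ← mul_assoc, mem_unitaryGroup_iff.mp hW, one_mul]
end

section
/- Let d ≥ 2 and let m be an integer not divisible by d. Define the d×d diagonal matrix U by U_{jk} = e^{πi m j/d}·δ_{jk} for j,k ∈ {1,…,d}. Then U is unitary, Tr(U†U*) = 0, and consequently its imaginarity-generating power attains the maximal value: (d² − |Tr(U†U*)|²)/(2d(d+2)) = d/(2(d+2)). -/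
/-!
The diagonal entries `z_j = exp(π i m j / d)` have modulus one, so `U` is unitary. Since `U` is
diagonal, `Tr(U†U*) = conj (∑ z_j²)`, and `z_j² = ω^j` with `ω = exp(2π i m / d)`, a `d`-th root
of unity different from `1` exactly because `d ∤ m`; the geometric sum `∑_{j=1}^{d} ω^j` therefore
vanishes.
-/

open Matrix Complex Finset
open scoped Real

namespace Matrix

variable {n R : Type*} [Fintype n] [DecidableEq n] [CommRing R] [StarRing R]

theorem diagonal_mem_unitaryGroup {z : n → R} (hz : ∀ i, z i ∈ unitary R) :
    diagonal z ∈ unitaryGroup n R := by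
  rw [mem_unitaryGroup_iff, star_eq_conjTranspose, diagonal_conjTranspose, diagonal_mul_diagonal,
    ← diagonal_one]
  exact congrArg diagonal (funext fun i => Unitary.mul_star_self_of_mem (hz i))

theorem trace_conjTranspose_mul_map_starRingEnd_diagonal (z : n → R) :
    ((diagonal z)ᴴ * (diagonal z).map (starRingEnd R)).trace = star (∑ i, z i ^ 2) := by
  rw [diagonal_conjTranspose, diagonal_map (map_zero _), diagonal_mul_diagonal, trace_diagonal,
    star_sum]
  simp [sq, starRingEnd_apply]

end Matrix

theorem Complex.exp_ofReal_mul_I_mem_unitary (θ : ℝ) : exp (θ * I) ∈ unitary ℂ := by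
  rw [Unitary.mem_iff_star_mul_self, ← starRingEnd_apply, conj_mul', norm_exp_ofReal_mul_I]
  norm_num

theorem sum_pow_succ_eq_zero_of_pow_eq_one {R : Type*} [CommRing R] [IsDomain R] {w : R} {n : ℕ}
    (hwn : w ^ n = 1) (hw : w ≠ 1) : ∑ j : Fin n, w ^ ((j : ℕ) + 1) = 0 := by
  have hgeom : ∑ j ∈ range n, w ^ j = 0 := by
    have := geom_sum_mul w n
    rw [hwn, sub_self] at this
    exact (mul_eq_zero.mp this).resolve_right (sub_ne_zero.mpr hw)
  simp_rw [Fin.sum_univ_eq_sum_range (fun j => w ^ (j + 1)), pow_succ, ← sum_mul, hgeom, zero_mul]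

theorem sum_exp_two_pi_mul_I_eq_zero {n : ℕ} {m : ℤ} (hm : ¬ (n : ℤ) ∣ m) :
    ∑ j : Fin n, exp (2 * π * I * m * ((j : ℕ) + 1) / n) = 0 := by
  rcases eq_or_ne n 0 with rfl | hn
  · simp
  set ζ := exp (2 * π * I / n)
  have hζ : IsPrimitiveRoot ζ n := isPrimitiveRoot_exp n hn
  have hpow : ∀ j : Fin n, exp (2 * π * I * m * ((j : ℕ) + 1) / n) = (ζ ^ m) ^ ((j : ℕ) + 1) := by
    intro j
    rw [← zpow_natCast, ← _root_.zpow_mul, ← exp_int_mul]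
    congr 1
    push_cast
    ring
  have hζm : (ζ ^ m) ^ n = 1 := by
    rw [← zpow_natCast, ← _root_.zpow_mul, mul_comm, _root_.zpow_mul, zpow_natCast, hζ.pow_eq_one,
      _root_.one_zpow]
  simp_rw [hpow]
  exact sum_pow_succ_eq_zero_of_pow_eq_one hζm ((hζ.zpow_eq_one_iff_dvd m).not.mpr hm)

theorem generalized_pauliZ_maximal_IGP_general
    (d : ℕ) (m : ℤ) (hm : ¬ (d : ℤ) ∣ m)
    (U : Matrix (Fin d) (Fin d) ℂ)
    (hUdef : U = Matrix.diagonal fun j : Fin d =>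
      Complex.exp (Real.pi * Complex.I * m * ((j : ℕ) + 1) / d)) :
    U ∈ Matrix.unitaryGroup (Fin d) ℂ ∧
    (Uᴴ * U.map (starRingEnd ℂ)).trace = 0 ∧
    ((d : ℝ) ^ 2 - ‖(Uᴴ * U.map (starRingEnd ℂ)).trace‖ ^ 2) /
        (2 * d * (d + 2)) = d / (2 * (d + 2)) := by
  have hunit : ∀ j : Fin d, exp (π * I * m * ((j : ℕ) + 1) / d) ∈ unitary ℂ := fun j => by
    convert exp_ofReal_mul_I_mem_unitary (π * m * ((j : ℕ) + 1) / d) using 2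
    push_cast
    ring
  have hsq : ∀ j : Fin d, exp (π * I * m * ((j : ℕ) + 1) / d) ^ 2
      = exp (2 * π * I * m * ((j : ℕ) + 1) / d) := fun j => by
    rw [← exp_nat_mul]
    ring_nf
  have htrace : (Uᴴ * U.map (starRingEnd ℂ)).trace = 0 := by
    rw [hUdef, trace_conjTranspose_mul_map_starRingEnd_diagonal]
    simp_rw [hsq, sum_exp_two_pi_mul_I_eq_zero hm, star_zero]
  refine ⟨hUdef ▸ diagonal_mem_unitaryGroup hunit, htrace, ?_⟩
  rw [htrace, norm_zero]
  rcases eq_or_ne (d : ℝ) 0 with hd0 | hd0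
  · simp [hd0]
  · field_simp
    ring

/-- **Generalized Pauli-Z operators maximize the imaginarity-generating power.**
For `d ≥ 2` and an integer `m` not divisible by `d`, the diagonal matrix
`U_{jk} = e^{πi m j/d} δ_{jk}` (with `j, k ∈ {1,…,d}`) is unitary, satisfies
`Tr(U†U*) = 0`, and its imaginarity-generating power attains the maximal value
`d/(2(d+2))`. -/
theorem generalized_pauliZ_maximal_IGP
    (d : ℕ) (hd : 2 ≤ d) (m : ℤ) (hm : ¬ (d : ℤ) ∣ m)
    (U : Matrix (Fin d) (Fin d) ℂ)
    (hUdef : U = Matrix.diagonal fun j : Fin d =>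
      Complex.exp (Real.pi * Complex.I * m * ((j : ℕ) + 1) / d)) :
    U ∈ Matrix.unitaryGroup (Fin d) ℂ ∧
    (Uᴴ * U.map (starRingEnd ℂ)).trace = 0 ∧
    ((d : ℝ) ^ 2 - ‖(Uᴴ * U.map (starRingEnd ℂ)).trace‖ ^ 2) /
        (2 * d * (d + 2)) = d / (2 * (d + 2)) :=
  generalized_pauliZ_maximal_IGP_general d m hm U hUdef
end

section
/- For every d ≥ 1 and all d×d complex unitary matrices U and V, one has | |Tr(UᵀU)|²/d² − |Tr(VᵀV)|²/d² | ≤ (4/√d)·‖U − V‖₂; that is, the function U ↦ |Tr(UᵀU)|²/d² on the unitary group is Lipschitz with constant 4/√d with respect to the Hilbert–Schmidt norm. -/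
open Matrix

noncomputable section

/-- The Hilbert–Schmidt (Frobenius) norm of a complex matrix: `‖A‖₂ = √(Tr(A†A))`. -/
def hsNorm {d : ℕ} (A : Matrix (Fin d) (Fin d) ℂ) : ℝ :=
  Real.sqrt ((Aᴴ * A).trace).re

/-!
Put `a = |Tr(UᵀU)|`, `b = |Tr(VᵀV)|`. Cauchy–Schwarz for the Hilbert–Schmidt inner product
gives `|Tr(AᵀB)| ≤ ‖A‖₂ ‖B‖₂`, and `‖U‖₂ = √d` for unitary `U`. Hence `a, b ≤ d`, and the identity
`UᵀU − VᵀV = Uᵀ(U − V) + (U − V)ᵀV` gives `|a − b| ≤ 2√d ‖U − V‖₂`. Therefore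
`|a² − b²| = (a + b)|a − b| ≤ 4 d √d ‖U − V‖₂`, and dividing by `d²` gives the bound.
-/

section

variable {m n : Type*} [Fintype m] [Fintype n]

def hsVec (A : Matrix m n ℂ) : EuclideanSpace ℂ (m × n) :=
  WithLp.toLp 2 fun p => A p.1 p.2

theorem inner_hsVec (A B : Matrix m n ℂ) : inner ℂ (hsVec A) (hsVec B) = (Aᴴ * B).trace := by
  simp only [hsVec, PiLp.inner_apply, Fintype.sum_prod_type, RCLike.inner_apply, trace, diag,
    mul_apply, conjTranspose_apply]
  rw [Finset.sum_comm]
  simp_rw [mul_comm]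
  rfl

end

theorem conjTranspose_map_conj {m n : Type*} (A : Matrix m n ℂ) :
    (A.map (starRingEnd ℂ))ᴴ = Aᵀ := by
  ext
  simp

theorem transpose_mul_self_sub_transpose_mul_self {n α : Type*} [Fintype n] [Ring α]
    (U V : Matrix n n α) :
    Uᵀ * U - Vᵀ * V = Uᵀ * (U - V) + (U - V)ᵀ * V := by
  rw [transpose_sub, mul_sub, sub_mul]
  abel

theorem abs_sq_sub_sq_le {a b c M : ℝ} (ha : 0 ≤ a) (hb : 0 ≤ b) (haM : a ≤ M) (hbM : b ≤ M)
    (hab : |a - b| ≤ c) : |a ^ 2 - b ^ 2| ≤ 2 * M * c := by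
  rw [sq_sub_sq, abs_mul, abs_of_nonneg (add_nonneg ha hb)]
  exact mul_le_mul (by linarith) hab (abs_nonneg _) (by linarith)

variable {d : ℕ}

theorem hsNorm_eq_norm_hsVec (A : Matrix (Fin d) (Fin d) ℂ) : hsNorm A = ‖hsVec A‖ := by
  rw [hsNorm, ← inner_hsVec, norm_eq_sqrt_re_inner (𝕜 := ℂ)]
  rfl

theorem norm_trace_conjTranspose_mul_le (A B : Matrix (Fin d) (Fin d) ℂ) :
    ‖(Aᴴ * B).trace‖ ≤ hsNorm A * hsNorm B := by
  rw [← inner_hsVec, hsNorm_eq_norm_hsVec, hsNorm_eq_norm_hsVec]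
  exact norm_inner_le_norm _ _

theorem hsNorm_map_conj (A : Matrix (Fin d) (Fin d) ℂ) :
    hsNorm (A.map (starRingEnd ℂ)) = hsNorm A := by
  have : (A.map (starRingEnd ℂ))ᴴ * A.map (starRingEnd ℂ) = (Aᴴ * A)ᵀ := by
    rw [transpose_mul, conjTranspose_map_conj]
    rfl
  rw [hsNorm, hsNorm, this, trace_transpose]

theorem norm_trace_transpose_mul_le (A B : Matrix (Fin d) (Fin d) ℂ) :
    ‖(Aᵀ * B).trace‖ ≤ hsNorm A * hsNorm B := by
  simpa [conjTranspose_map_conj, hsNorm_map_conj] using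
    norm_trace_conjTranspose_mul_le (A.map (starRingEnd ℂ)) B

theorem hsNorm_of_mem_unitaryGroup {U : Matrix (Fin d) (Fin d) ℂ}
    (hU : U ∈ unitaryGroup (Fin d) ℂ) : hsNorm U = Real.sqrt d := by
  rw [hsNorm, ← star_eq_conjTranspose, hU.1]
  simp

theorem norm_trace_transpose_mul_self_le {U : Matrix (Fin d) (Fin d) ℂ}
    (hU : U ∈ unitaryGroup (Fin d) ℂ) : ‖(Uᵀ * U).trace‖ ≤ d := by
  simpa [hsNorm_of_mem_unitaryGroup hU] using norm_trace_transpose_mul_le U U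

theorem norm_trace_transpose_mul_self_sub_le {U V : Matrix (Fin d) (Fin d) ℂ}
    (hU : U ∈ unitaryGroup (Fin d) ℂ) (hV : V ∈ unitaryGroup (Fin d) ℂ) :
    ‖(Uᵀ * U).trace - (Vᵀ * V).trace‖ ≤ 2 * Real.sqrt d * hsNorm (U - V) := by
  rw [← trace_sub, transpose_mul_self_sub_transpose_mul_self, trace_add]
  calc _ ≤ ‖(Uᵀ * (U - V)).trace‖ + ‖((U - V)ᵀ * V).trace‖ := norm_add_le _ _
    _ ≤ Real.sqrt d * hsNorm (U - V) + hsNorm (U - V) * Real.sqrt d := by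
      gcongr
      · simpa [hsNorm_of_mem_unitaryGroup hU] using norm_trace_transpose_mul_le U (U - V)
      · simpa [hsNorm_of_mem_unitaryGroup hV] using norm_trace_transpose_mul_le (U - V) V
    _ = 2 * Real.sqrt d * hsNorm (U - V) := by ring

theorem normIGP_lipschitz_general
    (d : ℕ)
    (U V : Matrix (Fin d) (Fin d) ℂ)
    (hU : U ∈ Matrix.unitaryGroup (Fin d) ℂ)
    (hV : V ∈ Matrix.unitaryGroup (Fin d) ℂ) :
    |‖(Uᵀ * U).trace‖ ^ 2 / (d : ℝ) ^ 2 -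
        ‖(Vᵀ * V).trace‖ ^ 2 / (d : ℝ) ^ 2| ≤
      4 / Real.sqrt d * hsNorm (U - V) := by
  obtain rfl | hd := d.eq_zero_or_pos
  · -- both sides are `0`, the left one through division by `0`
    simp
  have hd_pos : (0 : ℝ) < d := by exact_mod_cast hd
  have hsqrt : Real.sqrt d ^ 2 = d := Real.sq_sqrt hd_pos.le
  have key : |‖(Uᵀ * U).trace‖ ^ 2 - ‖(Vᵀ * V).trace‖ ^ 2|
      ≤ 2 * d * (2 * Real.sqrt d * hsNorm (U - V)) :=
    abs_sq_sub_sq_le (norm_nonneg _) (norm_nonneg _) (norm_trace_transpose_mul_self_le hU)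
      (norm_trace_transpose_mul_self_le hV)
      ((abs_norm_sub_norm_le _ _).trans (norm_trace_transpose_mul_self_sub_le hU hV))
  rw [div_sub_div_same, abs_div, abs_of_pos (pow_pos hd_pos 2), div_le_iff₀ (pow_pos hd_pos 2)]
  refine key.trans_eq ?_
  field_simp
  rw [hsqrt]
  ring

/-- **Lipschitz continuity of the normalized IGP functional.**
For all `d ≥ 1` and unitaries `U, V`,
`| |Tr(UᵀU)|²/d² − |Tr(VᵀV)|²/d² | ≤ (4/√d)·‖U − V‖₂`. -/
theorem normIGP_lipschitz
    (d : ℕ) (hd : 1 ≤ d)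
    (U V : Matrix (Fin d) (Fin d) ℂ)
    (hU : U ∈ Matrix.unitaryGroup (Fin d) ℂ)
    (hV : V ∈ Matrix.unitaryGroup (Fin d) ℂ) :
    |‖(Uᵀ * U).trace‖ ^ 2 / (d : ℝ) ^ 2 -
        ‖(Vᵀ * V).trace‖ ^ 2 / (d : ℝ) ^ 2| ≤
      4 / Real.sqrt d * hsNorm (U - V) :=
  normIGP_lipschitz_general d U V hU hV
end
end

section
/- Let {K_μ}_{μ=1}^{N} be a finite family of d×d real matrices satisfying Σ_μ K_μᵀ K_μ = I and Σ_μ K_μ K_μᵀ = I, and define the real unital channel Φ(ρ) = Σ_μ K_μ ρ K_μᵀ (with the K_μ regarded as complex matrices). Then for every d×d complex positive semidefinite matrix ρ with Tr(ρ) = 1, one has I(Φ(ρ)) ≤ I(ρ); that is, the Hilbert–Schmidt imaginarity is monotone under real unital operations. -/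
open Matrix
open scoped ComplexOrder

noncomputable section

lemma ptw (a b : ℂ) : (star a * b).re ≤ ((star a * a).re + (star b * b).re) / 2 := by
  simp only [Complex.star_def, Complex.mul_re, Complex.conj_re, Complex.conj_im]
  nlinarith [sq_nonneg (a.re - b.re), sq_nonneg (a.im - b.im)]

lemma trace_re_expand {n : Type*} [Fintype n] (X Y : Matrix n n ℂ) :
    ((Xᴴ * Y).trace).re = ∑ j, ∑ i, (star (X i j) * Y i j).re := by
  simp [Matrix.trace, Matrix.mul_apply, Matrix.diag, Matrix.conjTranspose_apply,
    Complex.re_sum]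

lemma trace_re_le {n : Type*} [Fintype n] (X Y : Matrix n n ℂ) :
    ((Xᴴ * Y).trace).re ≤ (((Xᴴ * X).trace).re + ((Yᴴ * Y).trace).re) / 2 := by
  rw [trace_re_expand, trace_re_expand, trace_re_expand]
  calc ∑ j, ∑ i, (star (X i j) * Y i j).re
      ≤ ∑ j, ∑ i, ((star (X i j) * X i j).re + (star (Y i j) * Y i j).re) / 2 := by
        refine Finset.sum_le_sum fun j _ => Finset.sum_le_sum fun i _ => ptw _ _
    _ = _ := by
        simp only [← Finset.sum_div, Finset.sum_add_distrib]

lemma contract {n : Type*} [Fintype n] [DecidableEq n] {ι : Type*} [Fintype ι]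
    (M : ι → Matrix n n ℂ)
    (h1 : ∑ i, (M i)ᴴ * M i = 1) (h2 : ∑ i, M i * (M i)ᴴ = 1)
    (A : Matrix n n ℂ) :
    ((∑ i, ((A * M i)ᴴ * (M i * A)).trace)).re ≤ ((Aᴴ * A).trace).re := by
  have e1 : ∑ i, ((M i * A)ᴴ * (M i * A)).trace = (Aᴴ * A).trace := by
    have h : ∀ i, (M i * A)ᴴ * (M i * A) = Aᴴ * ((M i)ᴴ * M i) * A := by
      intro i; rw [Matrix.conjTranspose_mul]; noncomm_ring
    simp_rw [h]
    rw [← Matrix.trace_sum]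
    congr 1
    rw [← Finset.sum_mul, ← Finset.mul_sum, h1, mul_one]
  have e2 : ∑ i, ((A * M i)ᴴ * (A * M i)).trace = (Aᴴ * A).trace := by
    have h : ∀ i, ((A * M i)ᴴ * (A * M i)).trace = (Aᴴ * A * (M i * (M i)ᴴ)).trace := by
      intro i
      rw [Matrix.conjTranspose_mul,
        show (M i)ᴴ * Aᴴ * (A * M i) = (M i)ᴴ * (Aᴴ * A * M i) by noncomm_ring,
        Matrix.trace_mul_comm]
      congr 1; noncomm_ring
    simp_rw [h]
    rw [← Matrix.trace_sum, ← Finset.mul_sum, h2, mul_one]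
  calc ((∑ i, ((A * M i)ᴴ * (M i * A)).trace)).re
      = ∑ i, (((A * M i)ᴴ * (M i * A)).trace).re := by rw [Complex.re_sum]
    _ ≤ ∑ i, ((((A * M i)ᴴ * (A * M i)).trace).re + (((M i * A)ᴴ * (M i * A)).trace).re) / 2 := by
        refine Finset.sum_le_sum fun i _ => trace_re_le _ _
    _ = ((∑ i, ((A * M i)ᴴ * (A * M i)).trace).re + (∑ i, ((M i * A)ᴴ * (M i * A)).trace).re) / 2 := by
        simp only [← Finset.sum_div, Finset.sum_add_distrib, Complex.re_sum]
    _ = ((Aᴴ * A).trace).re := by rw [e1, e2]; ring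

/-- **Monotonicity of the Hilbert–Schmidt imaginarity under real unital channels.**
If `{K_μ}` are real matrices with `Σ K_μᵀK_μ = I` and `Σ K_μK_μᵀ = I`, then for every
complex positive semidefinite `ρ` with `Tr(ρ) = 1`,
`I(Σ K_μ ρ K_μᵀ) ≤ I(ρ)`. -/
theorem imag_monotone_real_unital
    (d N : ℕ) (K : Fin N → Matrix (Fin d) (Fin d) ℝ)
    (hTP : ∑ μ : Fin N, (K μ)ᵀ * K μ = 1)
    (hUnital : ∑ μ : Fin N, K μ * (K μ)ᵀ = 1)
    (ρ : Matrix (Fin d) (Fin d) ℂ) (hρ : ρ.PosSemidef) (hρtr : ρ.trace = 1) :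
    Imag (∑ μ : Fin N, (K μ).map Complex.ofReal * ρ * ((K μ).map Complex.ofReal)ᵀ) ≤
      Imag ρ := by
  set L : Fin N → Matrix (Fin d) (Fin d) ℂ := fun μ => (K μ).map Complex.ofReal with hL
  have hconj : ∀ μ, (L μ)ᴴ = (L μ)ᵀ := by
    intro μ; ext i j
    simp [hL, Matrix.conjTranspose_apply, Matrix.map_apply, Complex.conj_ofReal]
  have htconj : ∀ μ, ((L μ)ᵀ)ᴴ = L μ := by
    intro μ; ext i j
    simp [hL, Matrix.conjTranspose_apply, Matrix.map_apply, Complex.conj_ofReal]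
  have hTP' : ∑ μ : Fin N, (L μ)ᵀ * L μ = 1 := by
    ext i j
    have h : (∑ μ : Fin N, (K μ)ᵀ * K μ) i j = (1 : Matrix (Fin d) (Fin d) ℝ) i j := by
      rw [hTP]
    simp only [Matrix.sum_apply, Matrix.mul_apply, Matrix.transpose_apply,
      Matrix.one_apply] at h ⊢
    simp only [hL, Matrix.map_apply]
    have := congrArg Complex.ofReal h
    simpa [Complex.ofReal_sum, apply_ite Complex.ofReal] using this
  have hU' : ∑ μ : Fin N, L μ * (L μ)ᵀ = 1 := by
    ext i j
    have h : (∑ μ : Fin N, K μ * (K μ)ᵀ) i j = (1 : Matrix (Fin d) (Fin d) ℝ) i j := by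
      rw [hUnital]
    simp only [Matrix.sum_apply, Matrix.mul_apply, Matrix.transpose_apply,
      Matrix.one_apply] at h ⊢
    simp only [hL, Matrix.map_apply]
    have := congrArg Complex.ofReal h
    simpa [Complex.ofReal_sum, apply_ite Complex.ofReal] using this
  set A : Matrix (Fin d) (Fin d) ℂ := ρ - ρᵀ with hA
  have hT : (∑ μ : Fin N, L μ * ρ * (L μ)ᵀ)ᵀ = ∑ μ : Fin N, L μ * ρᵀ * (L μ)ᵀ := by
    rw [Matrix.transpose_sum]
    refine Finset.sum_congr rfl fun μ _ => ?_
    simp [Matrix.transpose_mul, Matrix.mul_assoc]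
  have hdiff : (∑ μ : Fin N, L μ * ρ * (L μ)ᵀ) - (∑ μ : Fin N, L μ * ρ * (L μ)ᵀ)ᵀ
      = ∑ μ : Fin N, L μ * A * (L μ)ᵀ := by
    rw [hT, ← Finset.sum_sub_distrib]
    refine Finset.sum_congr rfl fun μ _ => ?_
    rw [hA]; noncomm_ring
  set M : Fin N × Fin N → Matrix (Fin d) (Fin d) ℂ := fun p => (L p.1)ᵀ * L p.2 with hM
  have hM1 : ∑ p : Fin N × Fin N, (M p)ᴴ * M p = 1 := by
    rw [Fintype.sum_prod_type]
    rw [Finset.sum_comm]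
    have : ∀ ν : Fin N, ∑ μ : Fin N, (M (μ, ν))ᴴ * M (μ, ν)
        = (L ν)ᵀ * (∑ μ : Fin N, L μ * (L μ)ᵀ) * L ν := by
      intro ν
      rw [Finset.mul_sum, Finset.sum_mul]
      refine Finset.sum_congr rfl fun μ _ => ?_
      rw [hM]
      simp only [Matrix.conjTranspose_mul, hconj, htconj]
      noncomm_ring
    simp_rw [this, hU', mul_one]
    exact hTP'
  have hM2 : ∑ p : Fin N × Fin N, M p * (M p)ᴴ = 1 := by
    rw [Fintype.sum_prod_type]
    have : ∀ μ : Fin N, ∑ ν : Fin N, M (μ, ν) * (M (μ, ν))ᴴ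
        = (L μ)ᵀ * (∑ ν : Fin N, L ν * (L ν)ᵀ) * L μ := by
      intro μ
      rw [Finset.mul_sum, Finset.sum_mul]
      refine Finset.sum_congr rfl fun ν _ => ?_
      rw [hM]
      simp only [Matrix.conjTranspose_mul, hconj, htconj]
      noncomm_ring
    simp_rw [this, hU', mul_one]
    exact hTP'
  have term : ∀ μ ν : Fin N, ((L μ * A * (L μ)ᵀ)ᴴ * (L ν * A * (L ν)ᵀ)).trace
      = ((A * M (μ, ν))ᴴ * (M (μ, ν) * A)).trace := by
    intro μ ν
    simp only [hM, Matrix.conjTranspose_mul, hconj, htconj]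
    rw [show L μ * (Aᴴ * (L μ)ᵀ) * (L ν * A * (L ν)ᵀ)
        = (L μ * Aᴴ * ((L μ)ᵀ * L ν) * A) * (L ν)ᵀ from by noncomm_ring,
      Matrix.trace_mul_comm]
    congr 1
    noncomm_ring
  have expand : ((∑ μ : Fin N, L μ * A * (L μ)ᵀ)ᴴ * (∑ μ : Fin N, L μ * A * (L μ)ᵀ)).trace
      = ∑ p : Fin N × Fin N, ((A * M p)ᴴ * (M p * A)).trace := by
    rw [Matrix.conjTranspose_sum, Finset.sum_mul_sum, Matrix.trace_sum]
    simp_rw [Matrix.trace_sum]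
    rw [Fintype.sum_prod_type]
    exact Finset.sum_congr rfl fun μ _ => Finset.sum_congr rfl fun ν _ => term μ ν
  have key := contract M hM1 hM2 A
  simp only [Imag]
  rw [← hA, hdiff, expand]
  linarith
end
end
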